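/- arXiv:0906.2166 — 5 statements merged into one kernel-verified Lean document; each statement's English description precedes it below -/
import Mathlib

section
/- If w : ℝ → ℝ is continuous, 0 ≤ w ≤ 1, and there exist δ > 0 and a set of times such that on every interval [t, t+1] with t ≥ 0 the measure of {s ∈ [t,t+1] : w(s) ≥ 1 - δ} is at least 1/2, then any solution p of p' = -p + w satisfies liminf_{t→∞} p(t) ≥ (1-δ)(1 - e^{-1/2})e^{-1} > 0; in particular p is eventually bounded away from zero. -/
open Real Filter MeasureTheory Set

theorem stmt4 (w p : ℝ → ℝ) (δ : ℝ) (hδ : 0 < δ) (hδ1 : δ < 1)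
    (hw_cont : Continuous w) (hw01 : ∀ t, 0 ≤ w t ∧ w t ≤ 1)
    (hmeas : ∀ t, 0 ≤ t →
      (1/2 : ENNReal) ≤ volume {s ∈ Icc t (t + 1) | 1 - δ ≤ w s})
    (hp : ∀ t, 0 ≤ t → HasDerivAt p (-p t + w t) t) :
    (1 - δ) * (1 - Real.exp (-(1/2))) * Real.exp (-1) ≤ Filter.liminf p atTop ∧
      0 < (1 - δ) * (1 - Real.exp (-(1/2))) * Real.exp (-1) := by
  have h1δ : 0 < 1 - δ := by linarith
  have hexph : Real.exp (-(1/2)) < 1 := Real.exp_lt_one_iff.2 (by norm_num)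
  have hcpos : 0 < (1 - δ) * (1 - Real.exp (-(1/2))) * Real.exp (-1) := by
    apply mul_pos (mul_pos h1δ (by linarith)) (Real.exp_pos _)
  refine ⟨?_, hcpos⟩
  -- representation formula
  have hcont : Continuous fun s => Real.exp s * w s := (Real.continuous_exp).mul hw_cont
  have key : ∀ T : ℝ, 0 ≤ T →
      Real.exp T * p T - p 0 = ∫ s in (0:ℝ)..T, Real.exp s * w s := by
    intro T hT
    have h := intervalIntegral.integral_eq_sub_of_hasDerivAt (f := fun t => Real.exp t * p t)
      (f' := fun t => Real.exp t * w t) ?_ (hcont.intervalIntegrable 0 T)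
    · simp only [Real.exp_zero, one_mul] at h
      linarith
    intro x hx
    rw [uIcc_of_le hT] at hx
    have := ((Real.hasDerivAt_exp x).fun_mul (hp x hx.1))
    exact this.congr_deriv (by ring)
  -- lower bound on the integral over [T-1, T] for T ≥ 1
  have hwle : ∀ s, 0 ≤ w s := fun s => (hw01 s).1
  have hbound : ∀ T : ℝ, 1 ≤ T →
      Real.exp (-1) * (1 - δ) / 2 + Real.exp (-T) * p 0 ≤ p T := by
    intro T hT
    have hT0 : (0:ℝ) ≤ T := by linarith
    have h1 : Real.exp T * p T = p 0 + ∫ s in (0:ℝ)..T, Real.exp s * w s := by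
      have := key T hT0
      linarith
    have hTm : T - 1 ≤ T := by linarith
    have hi1 : IntervalIntegrable (fun s => Real.exp s * w s) volume 0 (T-1) :=
      hcont.intervalIntegrable _ _
    have hi2 : IntervalIntegrable (fun s => Real.exp s * w s) volume (T-1) T :=
      hcont.intervalIntegrable _ _
    have hsplit : ∫ s in (0:ℝ)..T, Real.exp s * w s
        = (∫ s in (0:ℝ)..(T-1), Real.exp s * w s) + ∫ s in (T-1)..T, Real.exp s * w s :=
      (intervalIntegral.integral_add_adjacent_intervals hi1 hi2).symm
    have hnn : 0 ≤ ∫ s in (0:ℝ)..(T-1), Real.exp s * w s := by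
      apply intervalIntegral.integral_nonneg (by linarith)
      intro u _; exact mul_nonneg (Real.exp_pos u).le (hwle u)
    -- tail integral ≥ exp (T-1) * (1-δ)/2
    set A : Set ℝ := {s | 1 - δ ≤ w s} with hA
    have hAmeas : MeasurableSet A := (isClosed_le continuous_const hw_cont).measurableSet
    have hiind : IntervalIntegrable (A.indicator fun _ => Real.exp (T-1) * (1 - δ)) volume (T-1) T := by
      rw [intervalIntegrable_iff_integrableOn_Ioc_of_le hTm]
      exact ((integrableOn_const measure_Ioc_lt_top.ne) : IntegrableOn (fun _ => Real.exp (T-1) * (1 - δ)) (Ioc (T-1) T) volume).indicator hAmeas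
    have hstep : ∫ s in (T-1)..T, (A.indicator fun _ => Real.exp (T-1) * (1 - δ)) s
        ≤ ∫ s in (T-1)..T, Real.exp s * w s := by
      apply intervalIntegral.integral_mono_on hTm hiind hi2
      intro x hx
      by_cases hxA : x ∈ A
      · rw [Set.indicator_of_mem hxA]
        have h1 : Real.exp (T-1) ≤ Real.exp x := Real.exp_le_exp.2 hx.1
        have h2 : 1 - δ ≤ w x := hxA
        nlinarith [Real.exp_pos (T-1), hwle x]
      · rw [Set.indicator_of_notMem hxA]
        exact mul_nonneg (Real.exp_pos x).le (hwle x)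
    have hmeas' := hmeas (T-1) (by linarith)
    rw [show T - 1 + 1 = T by ring] at hmeas'
    have hsub : {s ∈ Icc (T-1) T | 1 - δ ≤ w s} ⊆ {T-1} ∪ (Ioc (T-1) T ∩ A) := by
      intro x hx
      rcases eq_or_lt_of_le hx.1.1 with h | h
      · exact Or.inl (by simp [← h])
      · exact Or.inr ⟨⟨h, hx.1.2⟩, hx.2⟩
    have hIoc : (1/2 : ENNReal) ≤ volume (Ioc (T-1) T ∩ A) := by
      calc (1/2 : ENNReal) ≤ volume {s ∈ Icc (T-1) T | 1 - δ ≤ w s} := hmeas'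
        _ ≤ volume ({T-1} ∪ (Ioc (T-1) T ∩ A)) := measure_mono hsub
        _ ≤ volume ({T-1} : Set ℝ) + volume (Ioc (T-1) T ∩ A) := measure_union_le _ _
        _ = volume (Ioc (T-1) T ∩ A) := by simp
    have hIocfin : volume (Ioc (T-1) T ∩ A) ≠ ⊤ :=
      (lt_of_le_of_lt (measure_mono Set.inter_subset_left) measure_Ioc_lt_top).ne
    have hIocReal : (1/2 : ℝ) ≤ (volume (Ioc (T-1) T ∩ A)).toReal := by
      have := ENNReal.toReal_mono hIocfin hIoc
      simpa using this
    have hind : ∫ s in (T-1)..T, (A.indicator fun _ => Real.exp (T-1) * (1 - δ)) s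
        = (volume (Ioc (T-1) T ∩ A)).toReal * (Real.exp (T-1) * (1 - δ)) := by
      rw [intervalIntegral.integral_of_le hTm, setIntegral_indicator hAmeas,
        setIntegral_const, smul_eq_mul]
      rfl
    have htail : Real.exp (T-1) * (1 - δ) / 2 ≤ ∫ s in (T-1)..T, Real.exp s * w s := by
      rw [hind] at hstep
      have hcnn : 0 ≤ Real.exp (T-1) * (1 - δ) := mul_pos (Real.exp_pos _) h1δ |>.le
      have := mul_le_mul_of_nonneg_right hIocReal hcnn
      linarith
    -- combine
    have hpt : Real.exp T * p T ≥ p 0 + Real.exp (T-1) * (1 - δ) / 2 := by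
      rw [h1, hsplit]; linarith
    have hexpT : 0 < Real.exp T := Real.exp_pos T
    have hET : Real.exp (-T) * Real.exp T = 1 := by
      rw [← Real.exp_add]; simp
    have hET1 : Real.exp (-T) * Real.exp (T-1) = Real.exp (-1) := by
      rw [← Real.exp_add]; ring_nf
    have := mul_le_mul_of_nonneg_left hpt (Real.exp_pos (-T)).le
    calc Real.exp (-1) * (1 - δ) / 2 + Real.exp (-T) * p 0
        = Real.exp (-T) * (p 0 + Real.exp (T-1) * (1 - δ) / 2) := by
          rw [mul_add]; rw [show Real.exp (-T) * (Real.exp (T-1) * (1-δ)/2)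
            = (Real.exp (-T) * Real.exp (T-1)) * (1-δ)/2 by ring, hET1]; ring
      _ ≤ Real.exp (-T) * (Real.exp T * p T) := this
      _ = p T := by rw [← mul_assoc, hET, one_mul]
  -- upper bound: p T ≤ |p 0| + 1 for T ≥ 0
  have hub : ∀ T : ℝ, 0 ≤ T → p T ≤ |p 0| + 1 := by
    intro T hT
    have h1 : Real.exp T * p T = p 0 + ∫ s in (0:ℝ)..T, Real.exp s * w s := by
      have := key T hT; linarith
    have hint : ∫ s in (0:ℝ)..T, Real.exp s * w s ≤ ∫ s in (0:ℝ)..T, Real.exp s := by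
      apply intervalIntegral.integral_mono_on hT (hcont.intervalIntegrable _ _)
        (Real.continuous_exp.intervalIntegrable _ _)
      intro x _
      nlinarith [Real.exp_pos x, (hw01 x).2, (hw01 x).1]
    rw [integral_exp] at hint
    have hpt : Real.exp T * p T ≤ p 0 + (Real.exp T - 1) := by
      rw [h1]; linarith [Real.exp_zero]
    have h2 : p 0 ≤ |p 0| := le_abs_self _
    have h3 : 1 ≤ Real.exp T := Real.one_le_exp hT
    have h4 : 0 ≤ |p 0| := abs_nonneg _
    have h5 : Real.exp T * p T ≤ Real.exp T * (|p 0| + 1) := by nlinarith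
    exact le_of_mul_le_mul_left h5 (Real.exp_pos T)
  -- finish via liminf
  set c := (1 - δ) * (1 - Real.exp (-(1/2))) * Real.exp (-1) with hc
  have hcc' : c < Real.exp (-1) * (1 - δ) / 2 := by
    have hhalf : (1:ℝ)/2 < Real.exp (-(1/2)) := by
      have := Real.add_one_lt_exp (x := -(1/2)) (by norm_num)
      linarith
    have : (1 - Real.exp (-(1/2))) < 1/2 := by linarith
    have hE : 0 < Real.exp (-1) := Real.exp_pos _
    rw [hc]; nlinarith
  have htend : Tendsto (fun T => Real.exp (-T) * p 0) atTop (nhds 0) := by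
    have : Tendsto (fun T : ℝ => Real.exp (-T)) atTop (nhds 0) := by
      simpa using Real.tendsto_exp_neg_atTop_nhds_zero
    simpa using this.mul_const (p 0)
  have hev : ∀ᶠ T in atTop, c ≤ p T := by
    have h1 : ∀ᶠ T in atTop, |Real.exp (-T) * p 0| < Real.exp (-1) * (1 - δ) / 2 - c := by
      have := htend.eventually (eventually_abs_sub_lt 0 (by linarith : (0:ℝ) < Real.exp (-1) * (1 - δ) / 2 - c))
      simpa using this
    have h2 : ∀ᶠ T in atTop, (1:ℝ) ≤ T := eventually_ge_atTop 1
    filter_upwards [h1, h2] with T hT1 hT2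
    have := hbound T hT2
    have := abs_lt.1 hT1
    linarith [this.1]
  have hcobdd : IsCoboundedUnder (· ≥ ·) atTop p := by
    apply Filter.IsBoundedUnder.isCoboundedUnder_ge
    refine ⟨|p 0| + 1, eventually_map.2 ?_⟩
    filter_upwards [eventually_ge_atTop (0:ℝ)] with T hT
    exact hub T hT
  exact le_liminf_of_le hcobdd hev
end

section
/- Let f : ℝⁿ → ℝⁿ be locally Lipschitz and p : [0,∞) → ℝ continuous, nonnegative, with convergent improper integral ∫₀^∞ p(s) ds = T < ∞. If z solves z'(t) = p(t) f(z(t)) on [0,∞) and the solution ζ of ζ' = f(ζ), ζ(0) = z(0) exists on [0, T], then z(t) → ζ(T) as t → ∞; i.e., z converges to a limit. -/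
open Real Filter Set intervalIntegral

open Metric in
open scoped NNReal Topology in
lemma loclip_compact {E F : Type*} [MetricSpace E] [MetricSpace F] {f : E → F}
    (hf : LocallyLipschitz f) {S : Set E} (hS : IsCompact S) :
    ∃ K : ℝ≥0, LipschitzOnWith K f S := by
  rcases S.eq_empty_or_nonempty with rfl | hne
  · exact ⟨1, by simp⟩
  have hfc : Continuous f := hf.continuous
  choose K t ht hK using hf
  obtain ⟨F', hF'mem, hF'⟩ := hS.elim_nhds_subcover (fun x => interior (t x))
    (fun x _ => interior_mem_nhds.mpr (ht x))
  obtain ⟨δ, hδ, hball⟩ := lebesgue_number_lemma_of_metric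
    (c := fun i : F' => interior (t i)) hS (fun i => isOpen_interior)
    (fun x hx => by
      obtain ⟨i, hiF, hxi⟩ := Set.mem_iUnion₂.1 (hF' hx)
      exact Set.mem_iUnion.2 ⟨⟨i, hiF⟩, hxi⟩)
  set C := Metric.diam (f '' S) with hCdef
  have hC : ∀ x ∈ S, ∀ y ∈ S, dist (f x) (f y) ≤ C := fun x hx y hy =>
    Metric.dist_le_diam_of_mem (hS.image hfc).isBounded
      (mem_image_of_mem f hx) (mem_image_of_mem f hy)
  set K₀ : ℝ≥0 := F'.sup K with hK₀
  set Kr : ℝ := max (K₀ : ℝ) (C / δ) with hKrdef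
  have hKr0 : (0:ℝ) ≤ Kr := le_trans K₀.coe_nonneg (le_max_left _ _)
  refine ⟨Kr.toNNReal, LipschitzOnWith.of_dist_le_mul fun x hx y hy => ?_⟩
  rw [Real.coe_toNNReal _ hKr0]
  rcases lt_or_ge (dist x y) δ with h | h
  · obtain ⟨i, hi⟩ := hball x hx
    have hxi : x ∈ t i := interior_subset (hi (mem_ball_self hδ))
    have hyi : y ∈ t i := interior_subset (hi (by rw [mem_ball, dist_comm]; exact h))
    calc dist (f x) (f y) ≤ (K i) * dist x y := (hK i).dist_le_mul x hxi y hyi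
      _ ≤ Kr * dist x y := by
          refine mul_le_mul_of_nonneg_right (le_trans ?_ (le_max_left _ _)) dist_nonneg
          exact_mod_cast Finset.le_sup i.2
  · have hC0 : 0 ≤ C := Metric.diam_nonneg
    calc dist (f x) (f y) ≤ C := hC x hx y hy
      _ = (C / δ) * δ := by field_simp
      _ ≤ Kr * dist x y :=
          mul_le_mul (le_max_right _ _) h (le_of_lt hδ) hKr0

open scoped NNReal Topology in
theorem stmt8 (n : ℕ) (f : EuclideanSpace ℝ (Fin n) → EuclideanSpace ℝ (Fin n))
    (hf : LocallyLipschitz f)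
    (p : ℝ → ℝ) (hp_cont : Continuous p) (hp_nonneg : ∀ t, 0 ≤ p t)
    (T : ℝ)
    (hpT : Tendsto (fun t => ∫ s in (0:ℝ)..t, p s) atTop (nhds T))
    (z ζ : ℝ → EuclideanSpace ℝ (Fin n))
    (hz : ∀ t, 0 ≤ t → HasDerivAt z (p t • f (z t)) t)
    (hζ : ∀ s ∈ Icc (0:ℝ) T, HasDerivAt ζ (f (ζ s)) s)
    (hζ0 : ζ 0 = z 0) :
    Tendsto z atTop (nhds (ζ T)) := by
  set P : ℝ → ℝ := fun t => ∫ s in (0:ℝ)..t, p s with hPdef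
  have hPint : ∀ a b : ℝ, IntervalIntegrable p MeasureTheory.volume a b :=
    fun a b => hp_cont.intervalIntegrable a b
  have hPderiv : ∀ t : ℝ, HasDerivAt P (p t) t := fun t =>
    intervalIntegral.integral_hasDerivAt_right (hPint 0 t)
      (hp_cont.stronglyMeasurableAtFilter _ _) hp_cont.continuousAt
  have hPmono : Monotone P := by
    intro a b hab
    have h1 : P b - P a = ∫ s in a..b, p s :=
      intervalIntegral.integral_interval_sub_left (hPint 0 b) (hPint 0 a)
    have h2 : (0:ℝ) ≤ ∫ s in a..b, p s :=
      intervalIntegral.integral_nonneg hab (fun u _ => hp_nonneg u)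
    linarith [h1 ▸ h2]
  have hPle : ∀ t, P t ≤ T := fun t => hPmono.ge_of_tendsto hpT t
  have hP0 : P 0 = 0 := intervalIntegral.integral_same
  have hPnonneg : ∀ t, 0 ≤ t → 0 ≤ P t := fun t ht => hP0 ▸ hPmono ht
  have hT0 : 0 ≤ T := hP0 ▸ hPle 0
  set w : ℝ → EuclideanSpace ℝ (Fin n) := fun t => ζ (P t) with hwdef
  have hw : ∀ t, 0 ≤ t → HasDerivAt w (p t • f (w t)) t := fun t ht =>
    HasDerivAt.scomp t (hζ (P t) ⟨hPnonneg t ht, hPle t⟩) (hPderiv t)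
  have key : ∀ b : ℝ, 0 ≤ b → z b = w b := by
    intro b hb
    have hzc : ContinuousOn z (Icc 0 b) := fun x hx =>
      ((hz x hx.1).continuousAt).continuousWithinAt
    have hwc : ContinuousOn w (Icc 0 b) := fun x hx =>
      ((hw x hx.1).continuousAt).continuousWithinAt
    set S : Set (EuclideanSpace ℝ (Fin n)) := z '' Icc 0 b ∪ w '' Icc 0 b with hSdef
    have hScomp : IsCompact S :=
      (isCompact_Icc.image_of_continuousOn hzc).union
        (isCompact_Icc.image_of_continuousOn hwc)
    obtain ⟨K, hK⟩ := loclip_compact hf hScomp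
    obtain ⟨c, hc, hcmax⟩ := isCompact_Icc.exists_isMaxOn (nonempty_Icc.2 hb)
      (hp_cont.continuousOn (s := Icc 0 b))
    set M : ℝ≥0 := ⟨p c, hp_nonneg c⟩ with hMdef
    set s : ℝ → Set (EuclideanSpace ℝ (Fin n)) :=
      fun t => if t ∈ Icc (0:ℝ) b then S else ∅ with hsdef
    have hv : ∀ t, LipschitzOnWith (M * K) (fun x => p t • f x) (s t) := by
      intro t
      by_cases htb : t ∈ Icc (0:ℝ) b
      · simp only [hsdef, if_pos htb]
        apply LipschitzOnWith.of_dist_le_mul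
        intro x hx y hy
        have h1 := hK.dist_le_mul x hx y hy
        calc dist (p t • f x) (p t • f y) = ‖p t‖ * dist (f x) (f y) := dist_smul₀ _ _ _
          _ ≤ p c * ((K : ℝ) * dist x y) := by
              rw [Real.norm_of_nonneg (hp_nonneg t)]
              exact mul_le_mul (hcmax htb) h1 dist_nonneg (hp_nonneg c)
          _ = ((M * K : ℝ≥0) : ℝ) * dist x y := by
              rw [NNReal.coe_mul]; show p c * ((K : ℝ) * dist x y) = p c * (K : ℝ) * dist x y; ring
      · simp only [hsdef, mem_Icc] at htb ⊢
        rw [if_neg htb]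
        exact lipschitzOnWith_empty _ _
    have heq : EqOn z w (Icc 0 b) := by
      apply ODE_solution_unique_of_mem_Icc_right (fun t _ => hv t) hzc
        (fun t ht => (hz t ht.1).hasDerivWithinAt)
        (fun t ht => by
          simp only [hsdef, if_pos (Ico_subset_Icc_self ht)]
          exact Or.inl (mem_image_of_mem z (Ico_subset_Icc_self ht)))
        hwc
        (fun t ht => (hw t ht.1).hasDerivWithinAt)
        (fun t ht => by
          simp only [hsdef, if_pos (Ico_subset_Icc_self ht)]
          exact Or.inr (mem_image_of_mem w (Ico_subset_Icc_self ht)))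
      show z 0 = w 0
      simp only [hwdef, hP0, hζ0]
    exact heq ⟨hb, le_refl b⟩
  have hcont : ContinuousAt ζ T := (hζ T ⟨hT0, le_refl T⟩).continuousAt
  have hwt : Tendsto w atTop (𝓝 (ζ T)) := hcont.tendsto.comp hpT
  exact hwt.congr' (by filter_upwards [eventually_ge_atTop (0:ℝ)] with t ht
    using (key t ht).symm)
end

section
/- Consider z'(t) = p(t)·f₁(z(t)) + (1 - p(t))·f₀(z(t)) where f₀, f₁ are locally Lipschitz, p is continuous with p(t) → 0 as t → ∞, and z is a bounded solution on [0,∞) whose omega-limit set is nonempty. Then any point in the omega-limit set of z together with the full omega-limit set is invariant under the flow of z' = f₀(z). (Asymptotically autonomous dynamics: the omega-limit set of z is invariant under the limiting vector field f₀.) -/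
open Real Filter Set

open NNReal in
lemma myLipOnCompact {E F : Type*} [MetricSpace E] [MetricSpace F] {f : E → F}
    (hf : LocallyLipschitz f) {K : Set E} (hK : IsCompact K) :
    ∃ L : ℝ, 0 ≤ L ∧ ∀ x ∈ K, ∀ y ∈ K, dist (f x) (f y) ≤ L * dist x y := by
  choose Kc t ht hlip using hf
  have hcover : K ⊆ ⋃ x : E, interior (t x) := fun x _ =>
    mem_iUnion.2 ⟨x, mem_interior_iff_mem_nhds.2 (ht x)⟩
  obtain ⟨I, hI⟩ := hK.elim_finite_subcover (fun x => interior (t x))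
    (fun x => isOpen_interior) hcover
  have hI' : K ⊆ ⋃ i : I, interior (t i) := by
    intro x hx
    obtain ⟨i, hi, hxi⟩ := mem_iUnion₂.1 (hI hx)
    exact mem_iUnion.2 ⟨⟨i, hi⟩, hxi⟩
  obtain ⟨δ, hδ, hball⟩ := lebesgue_number_lemma_of_metric hK
    (fun i : I => isOpen_interior) hI'
  set D := Metric.diam (f '' K) with hD
  have hDbd : ∀ x ∈ K, ∀ y ∈ K, dist (f x) (f y) ≤ D := by
    intro x hx y hy
    exact Metric.dist_le_diam_of_mem
      ((hK.image_of_continuousOn (LocallyLipschitz.continuous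
        (fun x => ⟨Kc x, t x, ht x, hlip x⟩)).continuousOn).isBounded)
      ⟨x, hx, rfl⟩ ⟨y, hy, rfl⟩
  refine ⟨max ((I.sup Kc : ℝ≥0) : ℝ) (D / δ), le_max_of_le_left (I.sup Kc).coe_nonneg, ?_⟩
  intro x hx y hy
  rcases lt_or_ge (dist x y) δ with h | h
  · obtain ⟨i, hi⟩ := hball x hx
    have hxy : x ∈ t i := interior_subset (hi (Metric.mem_ball_self hδ))
    have hyy : y ∈ t i := interior_subset (hi (by simpa [Metric.mem_ball, dist_comm] using h))
    calc dist (f x) (f y) ≤ (Kc i : ℝ) * dist x y :=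
          (lipschitzOnWith_iff_dist_le_mul.1 (hlip i)) x hxy y hyy
      _ ≤ _ := by
          apply mul_le_mul_of_nonneg_right _ dist_nonneg
          exact le_max_of_le_left (by exact_mod_cast NNReal.coe_le_coe.2 (Finset.le_sup i.2))
  · have hD0 : 0 ≤ D := Metric.diam_nonneg
    calc dist (f x) (f y) ≤ D := hDbd x hx y hy
      _ = D / δ * δ := by field_simp
      _ ≤ D / δ * dist x y := mul_le_mul_of_nonneg_left h (by positivity)
      _ ≤ _ := mul_le_mul_of_nonneg_right (le_max_right _ _) dist_nonneg

theorem stmt12 (n : ℕ)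
    (f₀ f₁ : EuclideanSpace ℝ (Fin n) → EuclideanSpace ℝ (Fin n))
    (hf₀ : LocallyLipschitz f₀) (hf₁ : LocallyLipschitz f₁)
    (p : ℝ → ℝ) (hp_cont : Continuous p) (hp_bdd : ∃ C, ∀ t, |p t| ≤ C)
    (hp_lim : Tendsto p atTop (nhds 0))
    (z : ℝ → EuclideanSpace ℝ (Fin n))
    (hz : ∀ t, 0 ≤ t →
      HasDerivAt z (p t • f₁ (z t) + (1 - p t) • f₀ (z t)) t)
    (hz_bdd : ∃ B, ∀ t, 0 ≤ t → ‖z t‖ ≤ B)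
    (ω : Set (EuclideanSpace ℝ (Fin n)))
    (hω : ω = {y | ∃ tk : ℕ → ℝ, Tendsto tk atTop atTop ∧
        Tendsto (fun k => z (tk k)) atTop (nhds y)})
    (hω_ne : ω.Nonempty) :
    ∀ y ∈ ω, ∀ η : ℝ → EuclideanSpace ℝ (Fin n),
      (∀ s, HasDerivAt η (f₀ (η s)) s) → η 0 = y → ∀ s, 0 ≤ s → η s ∈ ω := by
  subst hω
  intro y hy η hη hη0 s hs
  obtain ⟨tk, htk_top, htk_lim⟩ := hy
  obtain ⟨B, hB⟩ := hz_bdd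
  have hB0 : 0 ≤ B := le_trans (norm_nonneg _) (hB 0 le_rfl)
  have hη_cont : Continuous η := continuous_iff_continuousAt.2 fun u => (hη u).continuousAt
  obtain ⟨u₀, _, hηmax⟩ := isCompact_Icc.exists_isMaxOn (⟨0, le_refl 0, hs⟩ :
      (Icc (0:ℝ) s).Nonempty) ((continuous_norm.comp hη_cont).continuousOn)
  set R : ℝ := max B (‖η u₀‖) with hR
  have hR0 : 0 ≤ R := le_trans hB0 (le_max_left _ _)
  set K : Set (EuclideanSpace ℝ (Fin n)) := Metric.closedBall 0 R with hKdef
  have hK : IsCompact K := isCompact_closedBall _ _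
  have hzK : ∀ t, 0 ≤ t → z t ∈ K := by
    intro t ht
    rw [hKdef, mem_closedBall_zero_iff]
    exact le_trans (hB t ht) (le_max_left _ _)
  have hηK : ∀ u ∈ Icc (0:ℝ) s, η u ∈ K := by
    intro u hu
    rw [hKdef, mem_closedBall_zero_iff]
    exact le_trans (hηmax hu) (le_max_right _ _)
  obtain ⟨L₀, hL₀0, hL₀⟩ := myLipOnCompact hf₀ hK
  set L : ℝ := L₀ + 1 with hLdef
  have hL1 : 1 ≤ L := by linarith
  have hLpos : 0 < L := by linarith
  -- bound on ‖f₁ - f₀‖ on K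
  obtain ⟨x₀, _, hMmax⟩ := hK.exists_isMaxOn ⟨0, by
      rw [hKdef, mem_closedBall_zero_iff]; simpa using hR0⟩
    ((hf₁.continuous.sub hf₀.continuous).norm.continuousOn)
  set M : ℝ := ‖f₁ x₀ - f₀ x₀‖ with hMdef
  have hM0 : 0 ≤ M := norm_nonneg _
  refine ⟨fun k => tk k + s, tendsto_atTop_add_const_right atTop s htk_top, ?_⟩
  rw [Metric.tendsto_nhds]
  intro ε hε
  set E := Real.exp (L * s) with hEdef
  have hE1 : 1 ≤ E := Real.one_le_exp (by positivity)
  have hEpos : 0 < E := lt_of_lt_of_le one_pos hE1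
  set εp : ℝ := ε / (2 * (M + 1) * E) with hεpdef
  have hεp : 0 < εp := by positivity
  have hp_small : ∀ᶠ t in atTop, |p t| < εp := by
    have := Metric.tendsto_nhds.1 hp_lim εp hεp
    simpa [Real.dist_eq] using this
  obtain ⟨T, hT⟩ := eventually_atTop.1 hp_small
  have h1 : ∀ᶠ k in atTop, max T 0 ≤ tk k := htk_top.eventually_ge_atTop (max T 0)
  have h2 : ∀ᶠ k in atTop, dist (z (tk k)) y < ε / (2 * E) :=
    Metric.tendsto_nhds.1 htk_lim _ (by positivity)
  filter_upwards [h1, h2] with k hk1 hk2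
  set a := tk k with hadef
  have ha0 : 0 ≤ a := le_trans (le_max_right T 0) hk1
  have haT : T ≤ a := le_trans (le_max_left T 0) hk1
  set w : ℝ → EuclideanSpace ℝ (Fin n) := fun u => z (a + u) - η u with hwdef
  set w' : ℝ → EuclideanSpace ℝ (Fin n) := fun u =>
    (p (a + u) • f₁ (z (a + u)) + (1 - p (a + u)) • f₀ (z (a + u))) - f₀ (η u) with hw'def
  have hw : ∀ u, 0 ≤ u → HasDerivAt w (w' u) u := by
    intro u hu
    have hshift : HasDerivAt (fun v => z (a + v))
        (p (a + u) • f₁ (z (a + u)) + (1 - p (a + u)) • f₀ (z (a + u))) u := by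
      have h := (hz (a + u) (add_nonneg ha0 hu)).scomp u ((hasDerivAt_id u).const_add a)
      rw [one_smul] at h
      exact h
    exact hshift.sub (hη u)
  have hwcont : ContinuousOn w (Icc 0 s) :=
    fun u hu => ((hw u hu.1).continuousAt).continuousWithinAt
  have hbound : ∀ u ∈ Ico (0:ℝ) s, ‖w' u‖ ≤ L * ‖w u‖ + M * εp := by
    intro u hu
    have hzmem : z (a + u) ∈ K := hzK _ (add_nonneg ha0 hu.1)
    have hηmem : η u ∈ K := hηK u ⟨hu.1, le_of_lt hu.2⟩
    have heq : w' u = (f₀ (z (a + u)) - f₀ (η u)) +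
        p (a + u) • (f₁ (z (a + u)) - f₀ (z (a + u))) := by
      rw [hw'def]; module
    rw [heq]
    have h1' : ‖f₀ (z (a + u)) - f₀ (η u)‖ ≤ L * ‖w u‖ := by
      have := hL₀ _ hzmem _ hηmem
      rw [dist_eq_norm] at this
      calc ‖f₀ (z (a + u)) - f₀ (η u)‖ ≤ L₀ * ‖z (a + u) - η u‖ := this
        _ ≤ L * ‖w u‖ := by
            apply mul_le_mul_of_nonneg_right (by linarith) (norm_nonneg _)
    have h2' : ‖p (a + u) • (f₁ (z (a + u)) - f₀ (z (a + u)))‖ ≤ M * εp := by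
      rw [norm_smul, Real.norm_eq_abs]
      have hp' : |p (a + u)| ≤ εp := le_of_lt (hT (a + u) (by linarith [hu.1]))
      calc |p (a + u)| * ‖f₁ (z (a + u)) - f₀ (z (a + u))‖
          ≤ εp * M := mul_le_mul hp' (hMmax hzmem) (norm_nonneg _) (le_of_lt hεp)
        _ = M * εp := mul_comm _ _
    calc ‖_ + _‖ ≤ ‖f₀ (z (a + u)) - f₀ (η u)‖ +
          ‖p (a + u) • (f₁ (z (a + u)) - f₀ (z (a + u)))‖ := norm_add_le _ _
      _ ≤ L * ‖w u‖ + M * εp := add_le_add h1' h2'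
  have key := norm_le_gronwallBound_of_norm_deriv_right_le hwcont
    (fun u hu => (hw u hu.1).hasDerivWithinAt) (le_refl ‖w 0‖) hbound s ⟨hs, le_refl s⟩
  rw [sub_zero, gronwallBound_of_K_ne_0 (ne_of_gt hLpos)] at key
  have hw0 : ‖w 0‖ = dist (z a) y := by
    rw [hwdef]; simp [dist_eq_norm, hη0]
  have hws : dist (z (a + s)) (η s) = ‖w s‖ := by
    rw [hwdef]; simp [dist_eq_norm]
  rw [hws]
  have hterm1 : ‖w 0‖ * Real.exp (L * s) < ε / 2 := by
    rw [hw0]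
    calc dist (z a) y * Real.exp (L * s) < ε / (2 * E) * E :=
        mul_lt_mul_of_pos_right hk2 hEpos
      _ = ε / 2 := by field_simp
  have hterm2 : M * εp / L * (Real.exp (L * s) - 1) < ε / 2 := by
    have hstep1 : M * εp / L * (Real.exp (L * s) - 1) ≤ M * εp * E := by
      apply mul_le_mul (div_le_self (by positivity) hL1) (by rw [← hEdef]; linarith)
        (by rw [← hEdef]; linarith) (by positivity)
    have hstep2 : M * εp * E = M * ε / (2 * (M + 1)) := by
      rw [hεpdef]; field_simp
    have hstep3 : M * ε / (2 * (M + 1)) < ε / 2 := by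
      rw [div_lt_div_iff₀ (by positivity) (by norm_num)]
      nlinarith
    linarith
  calc ‖w s‖ ≤ ‖w 0‖ * Real.exp (L * s) + M * εp / L * (Real.exp (L * s) - 1) := key
    _ < ε := by linarith
end

section
/- In the full cascade x' = -x - u, p' = -p + α(x+u), z' = p·f(z), with u constant, α continuous with α(0)=0 and 0 ≤ α ≤ 1, f locally Lipschitz, and assuming the solution z is bounded on [0,∞): then x(t)+u → 0 exponentially, p(t) → 0 exponentially (in fact |p(t)| ≤ C e^{-λt} for some C, λ > 0 depending on the modulus of continuity of α at 0 — assume α(y) ≤ L|y| near 0 for some L), and ∫₀^∞ p(s) ds < ∞, hence z(t) converges to a limit as t → ∞. -/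
open Real Filter Set MeasureTheory

theorem stmt16 (n : ℕ) (u L : ℝ) (hL : 0 < L)
    (α : ℝ → ℝ) (hα_cont : Continuous α) (hα0 : α 0 = 0)
    (hα01 : ∀ y, 0 ≤ α y ∧ α y ≤ 1)
    (hαL : ∀ y : ℝ, |y| ≤ 1 → α y ≤ L * |y|)
    (f : EuclideanSpace ℝ (Fin n) → EuclideanSpace ℝ (Fin n))
    (hf : LocallyLipschitz f)
    (x p : ℝ → ℝ) (z : ℝ → EuclideanSpace ℝ (Fin n))
    (hx : ∀ t, 0 ≤ t → HasDerivAt x (-x t - u) t)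
    (hp : ∀ t, 0 ≤ t → HasDerivAt p (-p t + α (x t + u)) t)
    (hz : ∀ t, 0 ≤ t → HasDerivAt z (p t • f (z t)) t)
    (hz_bdd : ∃ B, ∀ t, 0 ≤ t → ‖z t‖ ≤ B) :
    (∃ C lam : ℝ, 0 < C ∧ 0 < lam ∧ ∀ t, 0 ≤ t →
        |x t + u| ≤ C * Real.exp (-lam * t) ∧ |p t| ≤ C * Real.exp (-lam * t)) ∧
      IntegrableOn p (Ici (0:ℝ)) ∧
      ∃ Z, Tendsto z atTop (nhds Z) := by
  set y0 : ℝ := x 0 + u with hy0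
  -- Step 1 : x t + u = y0 * exp (-t)
  have key1 : ∀ t, 0 ≤ t → x t + u = y0 * Real.exp (-t) := by
    intro t ht
    have hg : ∀ s ∈ Icc (0:ℝ) t,
        HasDerivWithinAt (fun s => Real.exp s * (x s + u)) 0 (Icc 0 t) s := by
      intro s hs
      have hd : HasDerivAt (fun s => Real.exp s * (x s + u))
          (Real.exp s * (x s + u) + Real.exp s * (-x s - u)) s :=
        (Real.hasDerivAt_exp s).mul ((hx s hs.1).add_const u)
      have : Real.exp s * (x s + u) + Real.exp s * (-x s - u) = 0 := by ring
      rw [this] at hd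
      exact hd.hasDerivWithinAt
    have := norm_image_sub_le_of_norm_deriv_le_segment' (C := 0) hg
      (fun s _ => by simp) t (by exact ⟨ht, le_refl t⟩)
    simp only [zero_mul, norm_le_zero_iff, sub_eq_zero] at this
    have h0 : Real.exp 0 * (x 0 + u) = y0 := by simp [hy0]
    have hxe : Real.exp t * (x t + u) = y0 := by rw [this, h0]
    have hexp : Real.exp t ≠ 0 := (Real.exp_pos t).ne'
    field_simp [Real.exp_neg] at hxe ⊢
    rw [← hxe, mul_comm (Real.exp t), mul_assoc, ← Real.exp_add]; simp
  set M : ℝ := max L 1 with hM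
  have hM1 : (1:ℝ) ≤ M := le_max_right _ _
  have hM0 : (0:ℝ) < M := lt_of_lt_of_le one_pos hM1
  -- pointwise bound α y ≤ M * sqrt |y|
  have hαsqrt : ∀ y : ℝ, α y ≤ M * Real.sqrt |y| := by
    intro y
    rcases le_or_gt |y| 1 with h1 | h1
    · have h2 : α y ≤ L * |y| := hαL y h1
      have h3 : |y| ≤ Real.sqrt |y| := by
        rcases eq_or_lt_of_le (abs_nonneg y) with h0 | h0
        · simp [← h0]
        · rw [Real.le_sqrt (abs_nonneg y) (abs_nonneg y)]
          nlinarith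
      calc α y ≤ L * |y| := h2
        _ ≤ M * |y| := mul_le_mul_of_nonneg_right (le_max_left _ _) (abs_nonneg y)
        _ ≤ M * Real.sqrt |y| := mul_le_mul_of_nonneg_left h3 hM0.le
    · have h2 : (1:ℝ) ≤ Real.sqrt |y| := by
        rw [Real.le_sqrt zero_le_one (abs_nonneg y)]
        nlinarith
      calc α y ≤ 1 := (hα01 y).2
        _ ≤ M * Real.sqrt |y| := by nlinarith
  set A : ℝ := M * Real.sqrt |y0| with hA
  have hA0 : 0 ≤ A := mul_nonneg hM0.le (Real.sqrt_nonneg _)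
  -- key bound on α (x t + u)
  have key2 : ∀ t, 0 ≤ t → α (x t + u) ≤ A * Real.exp (-(t/2)) := by
    intro t ht
    rw [key1 t ht]
    calc α (y0 * Real.exp (-t)) ≤ M * Real.sqrt |y0 * Real.exp (-t)| := hαsqrt _
      _ = A * Real.exp (-(t/2)) := by
          rw [abs_mul, abs_of_pos (Real.exp_pos _), Real.sqrt_mul (abs_nonneg y0), hA]
          have : Real.sqrt (Real.exp (-t)) = Real.exp (-(t/2)) := by
            rw [show -(t/2) = (-t)/2 by ring, Real.exp_half]
          rw [this]; ring
  -- w t = exp t * p t, monotone on Ici 0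
  set w : ℝ → ℝ := fun t => Real.exp t * p t with hw
  have hwderiv : ∀ t, 0 ≤ t → HasDerivAt w (Real.exp t * α (x t + u)) t := by
    intro t ht
    have hd : HasDerivAt w
        (Real.exp t * p t + Real.exp t * (-p t + α (x t + u))) t :=
      (Real.hasDerivAt_exp t).mul (hp t ht)
    have : Real.exp t * p t + Real.exp t * (-p t + α (x t + u))
        = Real.exp t * α (x t + u) := by ring
    rwa [this] at hd
  have hwmono : MonotoneOn w (Ici (0:ℝ)) := by
    apply monotoneOn_of_deriv_nonneg (convex_Ici 0)
    · exact fun t ht => ((hwderiv t ht).continuousAt).continuousWithinAt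
    · intro t ht
      rw [interior_Ici] at ht
      exact ((hwderiv t (le_of_lt ht)).differentiableAt).differentiableWithinAt
    · intro t ht
      rw [interior_Ici] at ht
      rw [(hwderiv t (le_of_lt ht)).deriv]
      exact mul_nonneg (Real.exp_pos t).le (hα01 _).1
  -- h t = 2*A*exp(t/2) - w t, monotone on Ici 0
  set h : ℝ → ℝ := fun t => 2 * A * Real.exp (t/2) - w t with hh
  have hhalf : ∀ t : ℝ, HasDerivAt (fun s => Real.exp (s/2)) (Real.exp (t/2) * (1/2)) t := by
    intro t
    exact (Real.hasDerivAt_exp (t/2)).comp t ((hasDerivAt_id t).div_const 2)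
  have hhderiv : ∀ t, 0 ≤ t →
      HasDerivAt h (2 * A * (Real.exp (t/2) * (1/2)) - Real.exp t * α (x t + u)) t := by
    intro t ht
    exact (((hhalf t).const_mul (2*A))).sub (hwderiv t ht)
  have hhmono : MonotoneOn h (Ici (0:ℝ)) := by
    apply monotoneOn_of_deriv_nonneg (convex_Ici 0)
    · exact fun t ht => ((hhderiv t ht).continuousAt).continuousWithinAt
    · intro t ht
      rw [interior_Ici] at ht
      exact ((hhderiv t (le_of_lt ht)).differentiableAt).differentiableWithinAt
    · intro t ht
      rw [interior_Ici] at ht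
      rw [(hhderiv t (le_of_lt ht)).deriv]
      have h1 : Real.exp t * α (x t + u) ≤ Real.exp t * (A * Real.exp (-(t/2))) :=
        mul_le_mul_of_nonneg_left (key2 t (le_of_lt ht)) (Real.exp_pos t).le
      have h2 : Real.exp t * (A * Real.exp (-(t/2))) = A * Real.exp (t/2) := by
        rw [show Real.exp t * (A * Real.exp (-(t/2)))
            = A * (Real.exp t * Real.exp (-(t/2))) by ring, ← Real.exp_add,
          show t + -(t/2) = t/2 by ring]
      nlinarith [h1, h2]
  -- bound on p
  have hpbound : ∀ t, 0 ≤ t → |p t| ≤ (|p 0| + 2*A) * Real.exp (-(t/2)) := by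
    intro t ht
    have hw0 : w 0 = p 0 := by simp [hw]
    have h1 : w 0 ≤ w t := hwmono (mem_Ici.2 (le_refl (0:ℝ))) ht ht
    have h2 : h 0 ≤ h t := hhmono (mem_Ici.2 (le_refl (0:ℝ))) ht ht
    have h0eq : h 0 = 2 * A - w 0 := by simp [hh]
    have hupper : w t ≤ w 0 + 2 * A * Real.exp (t/2) - 2*A := by
      have := h2; rw [h0eq] at this; simp only [hh] at this; linarith
    have hpt : p t = Real.exp (-t) * w t := by
      rw [hw]
      simp only [Real.exp_neg]
      field_simp
    rw [hpt, abs_mul, abs_of_pos (Real.exp_pos _)]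
    have hexp2 : Real.exp (-t) * Real.exp (t/2) = Real.exp (-(t/2)) := by
      rw [← Real.exp_add, show -t + t/2 = -(t/2) by ring]
    have hexple : Real.exp (-t) ≤ Real.exp (-(t/2)) := by
      apply Real.exp_le_exp.2; linarith
    have habs : |w t| ≤ |w 0| + 2 * A * Real.exp (t/2) := by
      rw [abs_le]
      constructor
      · have : -(|w 0|) ≤ w 0 := neg_abs_le _
        nlinarith [Real.exp_pos (t/2)]
      · have : w 0 ≤ |w 0| := le_abs_self _
        nlinarith [Real.exp_pos (t/2)]
    calc Real.exp (-t) * |w t| ≤ Real.exp (-t) * (|w 0| + 2 * A * Real.exp (t/2)) :=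
          mul_le_mul_of_nonneg_left habs (Real.exp_pos _).le
      _ = |w 0| * Real.exp (-t) + 2 * A * (Real.exp (-t) * Real.exp (t/2)) := by ring
      _ ≤ |w 0| * Real.exp (-(t/2)) + 2 * A * Real.exp (-(t/2)) := by
          rw [hexp2]
          have := mul_le_mul_of_nonneg_left hexple (abs_nonneg (w 0))
          linarith
      _ = (|p 0| + 2*A) * Real.exp (-(t/2)) := by rw [hw0]; ring
  -- the constant
  set C : ℝ := |p 0| + 2*A + |y0| + 1 with hC
  have hCpos : 0 < C := by positivity
  have hmain : ∀ t, 0 ≤ t →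
      |x t + u| ≤ C * Real.exp (-(1/2:ℝ) * t) ∧ |p t| ≤ C * Real.exp (-(1/2:ℝ) * t) := by
    intro t ht
    have hexp : Real.exp (-(1/2:ℝ) * t) = Real.exp (-(t/2)) := by
      rw [show -(1/2:ℝ) * t = -(t/2) by ring]
    constructor
    · rw [key1 t ht, abs_mul, abs_of_pos (Real.exp_pos _), hexp]
      have h1 : Real.exp (-t) ≤ Real.exp (-(t/2)) := by
        apply Real.exp_le_exp.2; linarith
      have h2 : |y0| ≤ C := by
        simp only [hC]
        nlinarith [abs_nonneg (p 0)]
      nlinarith [Real.exp_pos (-(t/2)), abs_nonneg y0]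
    · rw [hexp]
      have h1 := hpbound t ht
      have h2 : |p 0| + 2*A ≤ C := by simp only [hC]; nlinarith [abs_nonneg y0]
      nlinarith [Real.exp_pos (-(t/2))]
  -- continuity facts
  have hpcont : ContinuousOn p (Ici (0:ℝ)) :=
    fun t ht => ((hp t ht).continuousAt).continuousWithinAt
  have hzcont : ContinuousOn z (Ici (0:ℝ)) :=
    fun t ht => ((hz t ht).continuousAt).continuousWithinAt
  -- integrability of the exponential bound
  have hexpint : ∀ c : ℝ, IntegrableOn (fun t => c * Real.exp (-(1/2:ℝ) * t)) (Ici (0:ℝ)) := by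
    intro c
    rw [integrableOn_Ici_iff_integrableOn_Ioi]
    exact (exp_neg_integrableOn_Ioi 0 (by norm_num : (0:ℝ) < 1/2)).const_mul c
  -- integrability of p
  have hpint : IntegrableOn p (Ici (0:ℝ)) := by
    apply Integrable.mono' (hexpint C)
    · exact hpcont.aestronglyMeasurable measurableSet_Ici
    · filter_upwards [ae_restrict_mem measurableSet_Ici] with t ht
      exact (hmain t ht).2
  refine ⟨⟨C, 1/2, hCpos, by norm_num, hmain⟩, hpint, ?_⟩
  -- limit of z
  obtain ⟨B, hB⟩ := hz_bdd
  have hB0 : 0 ≤ B := le_trans (norm_nonneg _) (hB 0 le_rfl)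
  have hfc : ContinuousOn f (Metric.closedBall 0 B) := hf.continuous.continuousOn
  obtain ⟨F, hF⟩ := (isCompact_closedBall (0 : EuclideanSpace ℝ (Fin n)) B).exists_bound_of_continuousOn hfc
  have hF0 : 0 ≤ F := le_trans (norm_nonneg _) (hF 0 (by simp [hB0]))
  set g : ℝ → EuclideanSpace ℝ (Fin n) := fun s => p s • f (z s) with hg
  have hgcont : ContinuousOn g (Ici (0:ℝ)) :=
    hpcont.smul (hf.continuous.comp_continuousOn hzcont)
  have hgbound : ∀ s, 0 ≤ s → ‖g s‖ ≤ (F * C) * Real.exp (-(1/2:ℝ) * s) := by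
    intro s hs
    have h1 : ‖f (z s)‖ ≤ F := hF (z s) (by simp [Metric.mem_closedBall, dist_zero_right, hB s hs])
    have h2 : |p s| ≤ C * Real.exp (-(1/2:ℝ) * s) := (hmain s hs).2
    calc ‖g s‖ = |p s| * ‖f (z s)‖ := by rw [hg]; simp [norm_smul]
      _ ≤ (C * Real.exp (-(1/2:ℝ) * s)) * F := by
          apply mul_le_mul h2 h1 (norm_nonneg _)
          positivity
      _ = (F * C) * Real.exp (-(1/2:ℝ) * s) := by ring
  have hgint : IntegrableOn g (Ici (0:ℝ)) := by
    apply Integrable.mono' (hexpint (F * C))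
    · exact hgcont.aestronglyMeasurable measurableSet_Ici
    · filter_upwards [ae_restrict_mem measurableSet_Ici] with t ht
      exact hgbound t ht
  have hgint' : IntegrableOn g (Ioi (0:ℝ)) := hgint.mono_set Ioi_subset_Ici_self
  -- FTC
  have hftc : ∀ t, 0 ≤ t → z t = z 0 + ∫ s in (0:ℝ)..t, g s := by
    intro t ht
    have heq : ∫ s in (0:ℝ)..t, g s = z t - z 0 := by
      apply intervalIntegral.integral_eq_sub_of_hasDerivAt
      · intro s hs
        rw [uIcc_of_le ht] at hs
        exact hz s hs.1
      · apply ContinuousOn.intervalIntegrable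
        rw [uIcc_of_le ht]
        exact hgcont.mono (fun s hs => hs.1)
    rw [heq]; abel
  have hlim : Tendsto (fun t => z 0 + ∫ s in (0:ℝ)..t, g s) atTop
      (nhds (z 0 + ∫ s in Ioi (0:ℝ), g s)) := by
    exact tendsto_const_nhds.add
      (MeasureTheory.intervalIntegral_tendsto_integral_Ioi 0 hgint' tendsto_id)
  refine ⟨z 0 + ∫ s in Ioi (0:ℝ), g s, ?_⟩
  apply hlim.congr'
  filter_upwards [eventually_ge_atTop (0:ℝ)] with t ht
  exact (hftc t ht).symm
end

section
/- Let f : ℝⁿ → ℝⁿ be locally Lipschitz with all solutions of ζ' = f(ζ) bounded and defined on [0,∞), and let p be continuous with m ≤ p(t) ≤ M for constants 0 < m ≤ M. Then every solution z of z'(t) = p(t)f(z(t)) is defined on [0,∞), and its omega-limit set equals the omega-limit set of the corresponding solution ζ of ζ' = f(ζ) with the same initial condition. -/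
open Real Filter Set

theorem stmt19 (n : ℕ) (f : EuclideanSpace ℝ (Fin n) → EuclideanSpace ℝ (Fin n))
    (hf : LocallyLipschitz f)
    (hglobal : ∀ z₀ : EuclideanSpace ℝ (Fin n),
      ∃ ζ : ℝ → EuclideanSpace ℝ (Fin n), ζ 0 = z₀ ∧
        (∀ s, 0 ≤ s → HasDerivAt ζ (f (ζ s)) s) ∧ ∃ B, ∀ s, 0 ≤ s → ‖ζ s‖ ≤ B)
    (p : ℝ → ℝ) (m M : ℝ) (hm : 0 < m) (hmM : m ≤ M)
    (hp_cont : Continuous p) (hp_bds : ∀ t, 0 ≤ t → m ≤ p t ∧ p t ≤ M) :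
    ∀ z₀ : EuclideanSpace ℝ (Fin n), ∀ ζ : ℝ → EuclideanSpace ℝ (Fin n),
      ζ 0 = z₀ → (∀ s, 0 ≤ s → HasDerivAt ζ (f (ζ s)) s) →
      ∃ z : ℝ → EuclideanSpace ℝ (Fin n), z 0 = z₀ ∧
        (∀ t, 0 ≤ t → HasDerivAt z (p t • f (z t)) t) ∧
        {y | ∃ tk : ℕ → ℝ, Tendsto tk atTop atTop ∧
            Tendsto (fun k => z (tk k)) atTop (nhds y)} =
          {y | ∃ tk : ℕ → ℝ, Tendsto tk atTop atTop ∧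
            Tendsto (fun k => ζ (tk k)) atTop (nhds y)} := by
  intro z₀ ζ hζ0 hζderiv
  classical
  have hM : (0:ℝ) < M := lt_of_lt_of_le hm hmM
  set τ : ℝ → ℝ := fun t => ∫ s in (0:ℝ)..t, p s with hτdef
  have hτ0 : τ 0 = 0 := by simp [hτdef]
  have hτderiv : ∀ t, HasDerivAt τ (p t) t := fun t =>
    intervalIntegral.integral_hasDerivAt_right (hp_cont.intervalIntegrable 0 t)
      (hp_cont.stronglyMeasurableAtFilter _ _) hp_cont.continuousAt
  have hτcont : Continuous τ :=
    continuous_iff_continuousAt.2 fun t => (hτderiv t).continuousAt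
  have hτ_lb : ∀ t, 0 ≤ t → m * t ≤ τ t := by
    intro t ht
    have h1 : (∫ s in (0:ℝ)..t, m) ≤ ∫ s in (0:ℝ)..t, p s :=
      intervalIntegral.integral_mono_on ht intervalIntegrable_const
        (hp_cont.intervalIntegrable 0 t)
        (fun s hs => (hp_bds s hs.1).1)
    simpa [mul_comm] using h1
  have hτ_ub : ∀ t, 0 ≤ t → τ t ≤ M * t := by
    intro t ht
    have h1 : (∫ s in (0:ℝ)..t, p s) ≤ ∫ s in (0:ℝ)..t, M :=
      intervalIntegral.integral_mono_on ht (hp_cont.intervalIntegrable 0 t)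
        intervalIntegrable_const
        (fun s hs => (hp_bds s hs.1).2)
    simpa [mul_comm] using h1
  have hτnn : ∀ t, 0 ≤ t → 0 ≤ τ t := fun t ht =>
    le_trans (mul_nonneg hm.le ht) (hτ_lb t ht)
  have hsurj : ∀ s, 0 ≤ s → ∃ t, 0 ≤ t ∧ τ t = s := by
    intro s hs
    have hT : 0 ≤ s / m := div_nonneg hs hm.le
    have h1 : s ≤ τ (s / m) := by
      have := hτ_lb (s / m) hT
      rwa [mul_div_cancel₀ _ hm.ne'] at this
    have hmem : s ∈ Icc (τ 0) (τ (s / m)) := ⟨by rw [hτ0]; exact hs, h1⟩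
    obtain ⟨t, ht, hts⟩ := intermediate_value_Icc hT hτcont.continuousOn hmem
    exact ⟨t, ht.1, hts⟩
  refine ⟨fun t => ζ (τ t), by simp [hτ0, hζ0], ?_, ?_⟩
  · intro t ht
    exact (hζderiv (τ t) (hτnn t ht)).scomp t (hτderiv t)
  · ext y
    simp only [mem_setOf_eq]
    constructor
    · rintro ⟨tk, htk, hconv⟩
      refine ⟨fun k => τ (tk k), ?_, hconv⟩
      refine tendsto_atTop_mono' atTop ?_ (htk.const_mul_atTop hm)
      exact (htk.eventually_ge_atTop 0).mono fun k hk => hτ_lb _ hk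
    · rintro ⟨sk, hsk, hconv⟩
      set g : ℝ → ℝ := fun s => if h : 0 ≤ s then (hsurj s h).choose else 0 with hg
      have hgspec : ∀ s, 0 ≤ s → 0 ≤ g s ∧ τ (g s) = s := by
        intro s hs
        simp only [hg, dif_pos hs]
        exact ⟨(hsurj s hs).choose_spec.1, (hsurj s hs).choose_spec.2⟩
      refine ⟨fun k => g (sk k), ?_, ?_⟩
      · refine tendsto_atTop_mono' atTop ?_ (hsk.atTop_div_const hM)
        refine (hsk.eventually_ge_atTop 0).mono fun k hk => ?_
        obtain ⟨hg0, hgτ⟩ := hgspec _ hk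
        have := hτ_ub _ hg0
        rw [hgτ] at this
        exact (div_le_iff₀' hM).2 this
      · refine hconv.congr' ?_
        refine (hsk.eventually_ge_atTop 0).mono fun k hk => ?_
        show ζ (sk k) = ζ (τ (g (sk k)))
        rw [(hgspec _ hk).2]
end
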